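/- Bilinear cut-rank rule: for Γ ∈ 𝔽₂^{a×b} with rank_{𝔽₂}(Γ) = k, the real 2^a × 2^b matrix R with entries R_{u,v} = (-1)^{uᵀΓv} has real rank exactly 2^k. -/

import Mathlib

open Matrix

/-- Sign of a bit: `(-1)^c` as a real number. -/
def sgn (c : ZMod 2) : ℝ := if c = 0 then 1 else -1

/-!
The sign matrix factors as `R = H * P`, where `H u w = (-1)^(u ⬝ w)` is the Walsh–Hadamard matrix
on `𝔽₂^a` and `P w v = [Γ v = w]`. Orthogonality of the characters `w ↦ (-1)^(u ⬝ w)` gives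
`H * H = 2^a • 1`, so `H` is invertible and `rank R = rank P`. The columns of `P` are the standard
basis vectors indexed by the image of `Γ`, so `rank P = |im Γ| = 2^(rank Γ)`.
-/

lemma sgn_add (c d : ZMod 2) : sgn (c + d) = sgn c * sgn d := by
  obtain rfl | rfl : c = 0 ∨ c = 1 := by revert c; decide
  all_goals obtain rfl | rfl : d = 0 ∨ d = 1 := by revert d; decide
  all_goals simp [sgn, show (1 + 1 : ZMod 2) = 0 from rfl]

lemma sgn_eq_one_iff {c : ZMod 2} : sgn c = 1 ↔ c = 0 := by
  by_cases c = 0 <;> norm_num [sgn, *]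

section Walsh

variable {ι : Type*} [Fintype ι] [DecidableEq ι]

def dotProductChar (x : ι → ZMod 2) : AddChar (ι → ZMod 2) ℝ where
  toFun w := sgn (x ⬝ᵥ w)
  map_zero_eq_one' := by simp [sgn]
  map_add_eq_mul' v w := by rw [dotProduct_add, sgn_add]

lemma dotProductChar_eq_zero_iff {x : ι → ZMod 2} : dotProductChar x = 0 ↔ x = 0 := by
  refine ⟨fun h => funext fun i => ?_, by rintro rfl; ext w; simp [dotProductChar, sgn]⟩
  simpa [dotProductChar, dotProduct_single, sgn_eq_one_iff] using
    DFunLike.congr_fun h (Pi.single i 1)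

lemma sum_sgn_dotProduct (x : ι → ZMod 2) :
    ∑ w, sgn (x ⬝ᵥ w) = if x = 0 then (2 : ℝ) ^ Fintype.card ι else 0 := by
  have := (dotProductChar x).sum_eq_ite
  simp only [dotProductChar_eq_zero_iff] at this
  simpa [Fintype.card_pi, dotProductChar] using this

variable (ι) in
def walshMatrix : Matrix (ι → ZMod 2) (ι → ZMod 2) ℝ := of fun u w => sgn (u ⬝ᵥ w)

lemma walshMatrix_mul_self :
    walshMatrix ι * walshMatrix ι = (2 : ℝ) ^ Fintype.card ι • (1 : Matrix _ _ ℝ) := by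
  ext u v
  have hsum : ∀ w, sgn (u ⬝ᵥ w) * sgn (w ⬝ᵥ v) = sgn ((u + v) ⬝ᵥ w) := fun w => by
    rw [add_dotProduct, sgn_add, dotProduct_comm w]
  simp only [walshMatrix, mul_apply, of_apply, hsum, sum_sgn_dotProduct, Matrix.smul_apply,
    one_apply, add_eq_zero_iff_eq_neg, ZModModule.neg_eq_self]
  split_ifs <;> simp

lemma isUnit_det_walshMatrix : IsUnit (walshMatrix ι).det :=
  isUnit_det_of_right_inverse (B := ((2 : ℝ) ^ Fintype.card ι)⁻¹ • walshMatrix ι) <| by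
    rw [Matrix.mul_smul, walshMatrix_mul_self, smul_smul, inv_mul_cancel₀ (by positivity), one_smul]

end Walsh

namespace Matrix

variable {m n K : Type*}

lemma rank_one_submatrix [CommRing K] [Nontrivial K] [Fintype n] [Fintype m] [DecidableEq m]
    (f : n → m) : ((1 : Matrix m m K).submatrix id f).rank = Nat.card (Set.range f) := by
  have hcols : Set.range ((1 : Matrix m m K).submatrix id f).col =
      Set.range fun w : Set.range f => (Pi.single w.1 1 : m → K) := by
    rw [← Set.image_eq_range (fun w => Pi.single w 1), ← Set.range_comp]
    congr 1
    ext v w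
    simp [one_apply, Pi.single_apply]
  have hli : LinearIndependent K fun w : Set.range f => (Pi.single w.1 1 : m → K) :=
    (Pi.linearIndependent_single_one m K).comp _ Subtype.val_injective
  rw [rank_eq_finrank_span_cols, hcols, finrank_span_eq_card hli, Nat.card_eq_fintype_card]

lemma natCard_range_mulVec [Field K] [Fintype n] (A : Matrix m n K) :
    Nat.card (Set.range A.mulVec) = Nat.card K ^ A.rank := by
  rw [rank, ← Module.natCard_eq_pow_finrank]
  rfl

end Matrix

theorem bilinear_cut_rank_rule (a b : ℕ)
    (Γ : Matrix (Fin a) (Fin b) (ZMod 2))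
    (R : Matrix (Fin a → ZMod 2) (Fin b → ZMod 2) ℝ)
    (hR : ∀ u v, R u v = sgn (u ⬝ᵥ Γ.mulVec v)) :
    R.rank = 2 ^ Γ.rank := by
  have hfactor :
      R = walshMatrix (Fin a) * (1 : Matrix (Fin a → ZMod 2) _ ℝ).submatrix id Γ.mulVec := by
    rw [← Equiv.coe_refl, mul_submatrix_one]
    ext u v
    exact hR u v
  rw [hfactor, rank_mul_eq_right_of_isUnit_det _ _ isUnit_det_walshMatrix, rank_one_submatrix,
    natCard_range_mulVec, Nat.card_zmod]
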